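/- arXiv:2303.03765 — 6 statements merged into one kernel-verified Lean document; each statement's English description precedes it below -/
import Mathlib

section
/- Let P be a poset and θ an equivalence relation on P. The relation on the quotient set P/θ defined by [p] ≤ [q] iff there exist p' ∈ [p] and q' ∈ [q] with p' ≤ q' is a partial order if and only if θ is a weak order congruence. -/
/-- The quotient relation on `P/θ`: `[p] ≤ [q]` iff there exist representatives
`p' ∈ [p]`, `q' ∈ [q]` with `p' ≤ q'`. -/
def quotRel {P : Type*} [PartialOrder P] (θ : Setoid P) :
    Quotient θ → Quotient θ → Prop :=
  fun a b => ∃ p q : P, a = Quotient.mk θ p ∧ b = Quotient.mk θ q ∧ p ≤ q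

/-- `θ` is a weak order congruence. -/
def IsWeakOrderCongruence {P : Type*} [PartialOrder P] (θ : Setoid P) : Prop :=
  (∀ p q p' q' : P, p ≤ q → θ.r q q' → q' ≤ p' → θ.r p' p → θ.r p q) ∧
  (∀ p q q' r : P, p ≤ q → θ.r q q' → q' ≤ r →
    ∃ p' r' : P, θ.r p p' ∧ p' ≤ r' ∧ θ.r r' r)

section QuotRel

variable {P : Type*} [PartialOrder P] {θ : Setoid P}

theorem quotRel_mk_mk_iff {p q : P} :
    quotRel θ (Quotient.mk θ p) (Quotient.mk θ q) ↔
      ∃ p' q' : P, θ.r p p' ∧ θ.r q q' ∧ p' ≤ q' := by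
  simp only [quotRel, Quotient.eq]

theorem quotRel_of_le {p q : P} (h : p ≤ q) :
    quotRel θ (Quotient.mk θ p) (Quotient.mk θ q) :=
  ⟨p, q, rfl, rfl, h⟩

instance refl_quotRel : Std.Refl (quotRel θ) where
  refl a := Quotient.inductionOn a fun _ => quotRel_of_le le_rfl

theorem antisymm_quotRel_iff :
    Std.Antisymm (quotRel θ) ↔
      ∀ p q p' q' : P, p ≤ q → θ.r q q' → q' ≤ p' → θ.r p' p → θ.r p q := by
  constructor
  · intro h p q p' q' hpq hqq' hq'p' hp'p
    have hqp : quotRel θ (Quotient.mk θ q) (Quotient.mk θ p) :=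
      quotRel_mk_mk_iff.2 ⟨q', p', hqq', θ.symm hp'p, hq'p'⟩
    exact Quotient.exact (h.antisymm _ _ (quotRel_of_le hpq) hqp)
  · refine fun h => ⟨fun a b => Quotient.inductionOn₂ a b fun p q hpq hqp => ?_⟩
    obtain ⟨p₁, q₁, hpp₁, hqq₁, hp₁q₁⟩ := quotRel_mk_mk_iff.1 hpq
    obtain ⟨q₂, p₂, hqq₂, hpp₂, hq₂p₂⟩ := quotRel_mk_mk_iff.1 hqp
    have hp₁q₁ : θ.r p₁ q₁ :=
      h p₁ q₁ p₂ q₂ hp₁q₁ (θ.trans (θ.symm hqq₁) hqq₂) hq₂p₂ (θ.trans (θ.symm hpp₂) hpp₁)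
    exact Quotient.sound (θ.trans hpp₁ (θ.trans hp₁q₁ (θ.symm hqq₁)))

theorem isTrans_quotRel_iff :
    IsTrans (Quotient θ) (quotRel θ) ↔
      ∀ p q q' r : P, p ≤ q → θ.r q q' → q' ≤ r →
        ∃ p' r' : P, θ.r p p' ∧ p' ≤ r' ∧ θ.r r' r := by
  constructor
  · intro h p q q' r hpq hqq' hq'r
    have hqr : quotRel θ (Quotient.mk θ q) (Quotient.mk θ r) :=
      quotRel_mk_mk_iff.2 ⟨q', r, hqq', θ.refl r, hq'r⟩
    obtain ⟨p', r', hpp', hrr', hp'r'⟩ :=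
      quotRel_mk_mk_iff.1 (h.trans _ _ _ (quotRel_of_le hpq) hqr)
    exact ⟨p', r', hpp', hp'r', θ.symm hrr'⟩
  · refine fun h => ⟨fun a b c => Quotient.inductionOn₃ a b c fun p q r hpq hqr => ?_⟩
    obtain ⟨p₁, q₁, hpp₁, hqq₁, hp₁q₁⟩ := quotRel_mk_mk_iff.1 hpq
    obtain ⟨q₂, r₂, hqq₂, hrr₂, hq₂r₂⟩ := quotRel_mk_mk_iff.1 hqr
    obtain ⟨p', r', hp₁p', hp'r', hr'r₂⟩ :=
      h p₁ q₁ q₂ r₂ hp₁q₁ (θ.trans (θ.symm hqq₁) hqq₂) hq₂r₂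
    exact quotRel_mk_mk_iff.2
      ⟨p', r', θ.trans hpp₁ hp₁p', θ.trans hrr₂ (θ.symm hr'r₂), hp'r'⟩

end QuotRel

theorem quotRel_isPartialOrder_iff_weakOrderCongruence
    {P : Type*} [PartialOrder P] (θ : Setoid P) :
    IsPartialOrder (Quotient θ) (quotRel θ) ↔ IsWeakOrderCongruence θ := by
  constructor
  · intro h
    exact ⟨antisymm_quotRel_iff.1 h.toAntisymm, isTrans_quotRel_iff.1 h.toIsTrans⟩
  · rintro ⟨hantisymm, htrans⟩
    have := antisymm_quotRel_iff.2 hantisymm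
    have := isTrans_quotRel_iff.2 htrans
    exact {}
end

section
/- An equivalence relation θ on a poset P is a compatible congruence if and only if the transitive closure of the quotient relation on P/θ is antisymmetric (and hence a partial order). -/
/-- `r` is compatible: every `r`-circle lies in a single equivalence class, i.e.
all of its elements are pairwise `r`-related. -/
def IsCompatible {P : Type*} [PartialOrder P] (r : P → P → Prop) : Prop :=
  ∀ (n : ℕ) (p : Fin (n + 1) → P),
    (∀ i : Fin n, r (p i.castSucc) (p i.succ) ∨ p i.castSucc < p i.succ) →
    p 0 = p (Fin.last n) →
    ∀ i j, r (p i) (p j)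

private lemma step_of_le {P : Type*} [PartialOrder P] (θ : Setoid P) {p q : P} (h : p ≤ q) :
    θ.r p q ∨ p < q := by
  rcases lt_or_eq_of_le h with h | h
  · exact Or.inr h
  · exact Or.inl (h ▸ θ.refl p)

private lemma chain_of_transGen {P : Type*} [PartialOrder P] (θ : Setoid P) {a b : Quotient θ}
    (h : Relation.TransGen (quotRel θ) a b) :
    ∃ l : List P, ∃ hl : l ≠ [], List.IsChain (fun x y => θ.r x y ∨ x < y) l ∧
      Quotient.mk θ (l.head hl) = a ∧ Quotient.mk θ (l.getLast hl) = b := by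
  induction h with
  | single hab =>
    obtain ⟨p, q, ha, hb, hpq⟩ := hab
    exact ⟨[p, q], by simp, by simp [step_of_le θ hpq], ha.symm, hb.symm⟩
  | tail _ hbc ih =>
    obtain ⟨l, hl, hchain, hha, hhb⟩ := ih
    obtain ⟨p, q, hb, hc, hpq⟩ := hbc
    refine ⟨l ++ [p, q], by simp, ?_, ?_, ?_⟩
    · refine hchain.append (by simp [step_of_le θ hpq]) ?_
      intro x hx y hy
      simp [List.getLast?_eq_getLast hl] at hx
      simp at hy
      subst hx hy
      exact Or.inl (Quotient.exact (hhb.trans hb))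
    · rwa [List.head_append, dif_neg (by simpa using hl)]
    · rw [List.getLast_append]; simpa using hc.symm

theorem compatible_iff_transClosure_antisymm
    {P : Type*} [PartialOrder P] (θ : Setoid P) :
    IsCompatible θ.r ↔
      ∀ a b : Quotient θ, Relation.TransGen (quotRel θ) a b →
        Relation.TransGen (quotRel θ) b a → a = b := by
  constructor
  · intro hc a b hab hba
    obtain ⟨l₁, hl₁, hc₁, hh₁, hg₁⟩ := chain_of_transGen θ hab
    obtain ⟨l₂, hl₂, hc₂, hh₂, hg₂⟩ := chain_of_transGen θ hba
    set L : List P := l₁ ++ (l₂ ++ [l₁.head hl₁]) with hL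
    have hLne : L ≠ [] := by simp [hL]
    have hLchain : List.IsChain (fun x y => θ.r x y ∨ x < y) L := by
      refine hc₁.append (hc₂.append (by simp) ?_) ?_
      · intro x hx y hy
        simp [List.getLast?_eq_getLast hl₂] at hx
        simp at hy
        subst hx hy
        exact Or.inl (Quotient.exact (hg₂.trans hh₁.symm))
      · intro x hx y hy
        simp [List.getLast?_eq_getLast hl₁] at hx
        rw [List.head?_append, List.head?_eq_head hl₂] at hy
        simp at hy
        subst hx hy
        exact Or.inl (Quotient.exact (hg₁.trans hh₂.symm))
    have hlen : 1 ≤ L.length := List.length_pos_iff.2 hLne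
    set n : ℕ := L.length - 1 with hn
    have hlen' : L.length = n + 1 := by omega
    set f : Fin (n + 1) → P := fun i => L.get (Fin.cast hlen'.symm i) with hf
    have hstep : ∀ i : Fin n, θ.r (f i.castSucc) (f i.succ) ∨ f i.castSucc < f i.succ := by
      intro i
      have := List.isChain_iff_getElem.1 hLchain i (by omega)
      exact this
    have hcirc : f 0 = f (Fin.last n) := by
      have h0 : f 0 = L.head hLne := (List.head_eq_getElem hLne).symm
      have hlast : f (Fin.last n) = L.getLast hLne := by
        rw [List.getLast_eq_getElem]
        rfl
      rw [h0, hlast]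
      have e1 : L.getLast hLne = l₁.head hl₁ := by
        simp [hL, List.getLast_append]
      have e2 : L.head hLne = l₁.head hl₁ := by
        simp [hL, List.head_append, hl₁]
      rw [e1, e2]
    have key := hc n f hstep hcirc ⟨0, by omega⟩
      ⟨l₁.length, by have := List.length_pos_iff.2 hl₂; simp [hL] at hlen' ⊢; omega⟩
    have hf0 : Quotient.mk θ (f ⟨0, by omega⟩) = a := by
      have e : f ⟨0, by omega⟩ = L.head hLne := (List.head_eq_getElem hLne).symm
      have e2 : L.head hLne = l₁.head hl₁ := by
        simp [hL, List.head_append, hl₁]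
      rw [e, e2]
      exact hh₁
    have hf1 : Quotient.mk θ (f ⟨l₁.length, by
        have := List.length_pos_iff.2 hl₂; simp [hL] at hlen' ⊢; omega⟩) = b := by
      have h2 : l₂.length > 0 := List.length_pos_iff.2 hl₂
      have : f ⟨l₁.length, by simp [hL] at hlen' ⊢; omega⟩ = l₂.head hl₂ := by
        show (l₁ ++ (l₂ ++ [l₁.head hl₁]))[l₁.length]'_ = _
        rw [List.getElem_append_right (le_refl _), List.getElem_append_left (by omega)]
        · simp only [Nat.sub_self]
          exact (List.head_eq_getElem hl₂).symm
      rw [this]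
      exact hh₂
    rw [← hf0, ← hf1]
    exact Quotient.sound key
  · intro h n p hstep hcirc i j
    have fwd : ∀ d k : ℕ, (hk : k + d ≤ n) →
        Relation.ReflTransGen (quotRel θ) (Quotient.mk θ (p ⟨k, by omega⟩))
          (Quotient.mk θ (p ⟨k + d, by omega⟩)) := by
      intro d
      induction d with
      | zero => intro k hk; exact Relation.ReflTransGen.refl
      | succ d ih =>
        intro k hk
        refine (ih k (by omega)).tail ?_
        have := hstep ⟨k + d, by omega⟩
        rcases this with h' | h'
        · have : Quotient.mk θ (p (Fin.castSucc ⟨k + d, by omega⟩)) =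
              Quotient.mk θ (p (Fin.succ ⟨k + d, by omega⟩)) := Quotient.sound h'
          rw [show (⟨k + d, by omega⟩ : Fin (n+1)) = Fin.castSucc ⟨k + d, by omega⟩ from rfl,
            show (⟨k + (d+1), by omega⟩ : Fin (n+1)) = Fin.succ ⟨k + d, by omega⟩ from
              Fin.ext (by simp; omega), this]
          exact ⟨_, _, rfl, rfl, le_refl _⟩
        · exact ⟨_, _, rfl, by
            rw [show (⟨k + (d+1), by omega⟩ : Fin (n+1)) = Fin.succ ⟨k + d, by omega⟩ from
              Fin.ext (by simp; omega)], le_of_lt h'⟩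
    have any : ∀ i j : Fin (n+1), Relation.ReflTransGen (quotRel θ)
        (Quotient.mk θ (p i)) (Quotient.mk θ (p j)) := by
      intro i j
      have h1 : Relation.ReflTransGen (quotRel θ) (Quotient.mk θ (p i))
          (Quotient.mk θ (p (Fin.last n))) := by
        have := fwd (n - i.1) i.1 (by omega)
        rwa [show (⟨i.1, by omega⟩ : Fin (n+1)) = i from Fin.ext rfl,
          show (⟨i.1 + (n - i.1), by omega⟩ : Fin (n+1)) = Fin.last n from
            Fin.ext (by simp; omega)] at this
      have h2 : Relation.ReflTransGen (quotRel θ) (Quotient.mk θ (p 0))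
          (Quotient.mk θ (p j)) := by
        have := fwd j.1 0 (by omega)
        rwa [show (⟨0, by omega⟩ : Fin (n+1)) = 0 from rfl,
          show (⟨0 + j.1, by omega⟩ : Fin (n+1)) = j from Fin.ext (by simp)] at this
      rw [← hcirc] at h1
      exact h1.trans h2
    have hij := any i j
    have hji := any j i
    rcases Relation.reflTransGen_iff_eq_or_transGen.1 hij with he | ht
    · exact Quotient.exact he.symm
    · rcases Relation.reflTransGen_iff_eq_or_transGen.1 hji with he | ht'
      · exact Quotient.exact he
      · exact Quotient.exact (h _ _ ht ht')
end

section
/- Let P be a graded poset with rank function ρ and θ an equivalence relation on P such that ρ(p) = ρ(q) whenever p θ q. Then θ is a compatible congruence. -/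
theorem Monotone.apply_eq_apply_zero_of_apply_zero_eq_apply_last {α : Type*} [PartialOrder α]
    {n : ℕ} {f : Fin (n + 1) → α} (hf : Monotone f) (hclosed : f 0 = f (Fin.last n))
    (i : Fin (n + 1)) : f i = f 0 :=
  le_antisymm ((hf (Fin.le_last i)).trans_eq hclosed.symm) (hf (Fin.zero_le i))

theorem Setoid.rel_of_forall_rel_castSucc_succ {α : Type*} (θ : Setoid α) {n : ℕ}
    {p : Fin (n + 1) → α} (hstep : ∀ i : Fin n, θ (p i.castSucc) (p i.succ))
    (i j : Fin (n + 1)) : θ (p i) (p j) := by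
  have hzero : ∀ k, θ (p 0) (p k) :=
    Fin.induction (θ.refl _) fun k hk => θ.trans hk (hstep k)
  exact θ.trans (θ.symm (hzero i)) (hzero j)

theorem rank_constant_implies_compatible_general
    {P : Type*} [PartialOrder P] (θ : Setoid P) (ρ : P → ℤ)
    (hstrict : ∀ p q : P, p < q → ρ p < ρ q)
    (hconst : ∀ p q : P, θ.r p q → ρ p = ρ q) :
    IsCompatible θ.r := by
  intro n p hstep hclosed
  have hmono : Monotone (ρ ∘ p) := Fin.monotone_iff_le_succ.2 fun i =>
    (hstep i).elim (fun h => (hconst _ _ h).le) (fun h => (hstrict _ _ h).le)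
  have hflat := hmono.apply_eq_apply_zero_of_apply_zero_eq_apply_last (congrArg ρ hclosed)
  refine Setoid.rel_of_forall_rel_castSucc_succ θ fun i => (hstep i).resolve_right fun hlt => ?_
  exact (hstrict _ _ hlt).ne ((hflat _).trans (hflat _).symm)

theorem rank_constant_implies_compatible
    {P : Type*} [PartialOrder P] (θ : Setoid P) (ρ : P → ℤ)
    (hstrict : ∀ p q : P, p < q → ρ p < ρ q)
    (hcov : ∀ p q : P, p ⋖ q → ρ q = ρ p + 1)
    (hconst : ∀ p q : P, θ.r p q → ρ p = ρ q) :
    IsCompatible θ.r :=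
  rank_constant_implies_compatible_general θ ρ hstrict hconst
end

section
/- Let P be a finite poset and θ an equivalence relation on P such that: every θ-equivalence class is an interval [min class, max class], and both the map π↓ sending each element to the minimal element of its class and the map π↑ sending each element to the maximal element of its class are order-preserving. Then the quotient relation on P/θ, given by [p] ≤ [q] iff ∃ p' ∈ [p], q' ∈ [q] with p' ≤ q', is a partial order. -/
/-!
Everything reduces to one criterion: `[p] ≤ [q]` holds iff `π↓ p ≤ q`. Indeed, if `p' ≤ q'`
with `p' ∈ [p]`, `q' ∈ [q]`, then `π↓ p = π↓ p' ≤ π↓ q' = π↓ q ≤ q` by monotonicity of `π↓`;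
conversely `π↓ p ≤ q` is itself a witness. Transitivity then follows from `π↓ ∘ π↓ = π↓`, and
antisymmetry from `q ≤ π↑ (π↓ q) ≤ π↑ p` once `π↓ q ≤ p`.
-/

section IntervalClasses

variable {P : Type*} [PartialOrder P] {θ : Setoid P} {πdown πup : P → P}
  (hint : ∀ p q : P, θ p q ↔ πdown p ≤ q ∧ q ≤ πup p)
include hint

theorem down_le_self (p : P) : πdown p ≤ p :=
  ((hint p p).1 (θ.refl p)).1

theorem le_up_self (p : P) : p ≤ πup p :=
  ((hint p p).1 (θ.refl p)).2

theorem rel_down (p : P) : θ p (πdown p) :=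
  (hint p _).2 ⟨le_rfl, (down_le_self hint p).trans (le_up_self hint p)⟩

theorem down_eq_of_rel {p q : P} (h : θ p q) : πdown p = πdown q :=
  le_antisymm ((hint p _).1 (θ.trans h (rel_down hint q))).1
    ((hint q _).1 (θ.trans (θ.symm h) (rel_down hint p))).1

theorem down_down (p : P) : πdown (πdown p) = πdown p :=
  (down_eq_of_rel hint (rel_down hint p)).symm

theorem le_up_down (p : P) : p ≤ πup (πdown p) :=
  ((hint _ p).1 (θ.symm (rel_down hint p))).2

theorem quotRel_mk_iff (hdown : Monotone πdown) (p q : P) :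
    quotRel θ (Quotient.mk θ p) (Quotient.mk θ q) ↔ πdown p ≤ q := by
  constructor
  · rintro ⟨p', q', hp, hq, hpq⟩
    calc πdown p = πdown p' := down_eq_of_rel hint (Quotient.exact hp)
      _ ≤ πdown q' := hdown hpq
      _ = πdown q := (down_eq_of_rel hint (Quotient.exact hq)).symm
      _ ≤ q := down_le_self hint q
  · intro h
    exact ⟨πdown p, q, Quotient.sound (rel_down hint p), rfl, h⟩

end IntervalClasses

theorem reading_congruence_quotient_is_partialOrder_general
    {P : Type*} [PartialOrder P] (θ : Setoid P)
    (πdown πup : P → P)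
    (hint : ∀ p q : P, θ.r p q ↔ (πdown p ≤ q ∧ q ≤ πup p))
    (hdown : Monotone πdown) (hup : Monotone πup) :
    IsPartialOrder (Quotient θ) (quotRel θ) := by
  have key := quotRel_mk_iff hint hdown
  refine { refl := ?_, trans := ?_, antisymm := ?_ }
  · exact Quotient.ind fun p => (key p p).2 (down_le_self hint p)
  · refine Quotient.ind fun p => Quotient.ind fun q => Quotient.ind fun r => ?_
    simp only [key]
    intro hpq hqr
    calc πdown p = πdown (πdown p) := (down_down hint p).symm
      _ ≤ πdown q := hdown hpq
      _ ≤ r := hqr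
  · refine Quotient.ind fun p => Quotient.ind fun q => ?_
    simp only [key]
    intro hpq hqp
    refine Quotient.sound ((hint p q).2 ⟨hpq, ?_⟩)
    calc q ≤ πup (πdown q) := le_up_down hint q
      _ ≤ πup p := hup hqp

/-- Reading's characterisation: every class is the interval `[π↓ p, π↑ p]` and the
two projections are order-preserving; then the quotient relation is a partial order. -/
theorem reading_congruence_quotient_is_partialOrder
    {P : Type*} [PartialOrder P] [Finite P] (θ : Setoid P)
    (πdown πup : P → P)
    (hint : ∀ p q : P, θ.r p q ↔ (πdown p ≤ q ∧ q ≤ πup p))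
    (hdown : Monotone πdown) (hup : Monotone πup) :
    IsPartialOrder (Quotient θ) (quotRel θ) :=
  reading_congruence_quotient_is_partialOrder_general θ πdown πup hint hdown hup
end

section
/- Let P be a finite poset and G a group of automorphisms of P, with θ the equivalence relation whose classes are the G-orbits. Then the quotient relation on P/θ, defined by [p] ≤ [q] iff ∃ g, h ∈ G with g(p) ≤ h(q), is a partial order. -/
/-! A monotone injection `f` of a finite poset with `f p ≤ p` fixes `p`: the orbit of `p` is
periodic, so `p = f^[n] p ≤ f p` for a period `n ≥ 1`. Hence if `g • p ≤ q` and `h • q ≤ p`, then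
`g h` fixes `q` and `q = g • h • q ≤ g • p ≤ q`, so `p` and `q` lie in one orbit. -/

open Function MulAction

theorem Monotone.map_eq_self_of_map_le {P : Type*} [PartialOrder P] [Finite P] {f : P → P}
    (hmono : Monotone f) (hinj : Injective f) {p : P} (hp : f p ≤ p) : f p = p := by
  obtain ⟨n, hn, hper⟩ := hinj.mem_periodicPts p
  refine le_antisymm hp ?_
  calc p = f^[n] p := hper.eq.symm
    _ ≤ f^[1] p := hmono.antitone_iterate_of_map_le hp hn
    _ = f p := rfl

namespace MulAction

variable {P : Type*} [PartialOrder P] {G : Type*} [Group G] [MulAction G P]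

def LeOrbit (G : Type*) [Group G] [MulAction G P] (p q : P) : Prop :=
  ∃ g : G, g • p ≤ q

theorem leOrbit_refl (p : P) : LeOrbit G p p :=
  ⟨1, (one_smul G p).le⟩

theorem LeOrbit.trans (hmono : ∀ g : G, Monotone (g • · : P → P)) {p q r : P}
    (hpq : LeOrbit G p q) (hqr : LeOrbit G q r) : LeOrbit G p r := by
  obtain ⟨g, hg⟩ := hpq
  obtain ⟨h, hh⟩ := hqr
  exact ⟨h * g, (mul_smul h g p).trans_le ((hmono h hg).trans hh)⟩

theorem LeOrbit.mem_orbit [Finite P] (hmono : ∀ g : G, Monotone (g • · : P → P))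
    {p q : P} (hpq : LeOrbit G p q) (hqp : LeOrbit G q p) : q ∈ orbit G p := by
  obtain ⟨g, hg⟩ := hpq
  obtain ⟨h, hh⟩ := hqp
  have hfix : (g * h) • q = q := by
    refine (hmono (g * h)).map_eq_self_of_map_le (MulAction.injective (g * h)) ?_
    rw [mul_smul]
    exact (hmono g hh).trans hg
  have hq_le : q ≤ g • p := by
    calc q = g • h • q := by rw [← mul_smul, hfix]
      _ ≤ g • p := hmono g hh
  exact ⟨g, le_antisymm hg hq_le⟩

theorem leOrbit_of_mem_orbit {p q : P} (hp : p ∈ orbit G q) : LeOrbit G p q := by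
  obtain ⟨g, rfl⟩ := hp
  exact ⟨g⁻¹, (inv_smul_smul g q).le⟩

theorem leOrbit_iff_exists_smul_le_smul (hmono : ∀ g : G, Monotone (g • · : P → P)) {p q : P} :
    LeOrbit G p q ↔ ∃ g h : G, g • p ≤ h • q := by
  constructor
  · rintro ⟨g, hg⟩
    exact ⟨g, 1, by rwa [one_smul]⟩
  · rintro ⟨g, h, hgh⟩
    exact ⟨h⁻¹ * g, by simpa [mul_smul] using hmono h⁻¹ hgh⟩

theorem exists_mk_eq_mk_smul_le_smul_iff (hmono : ∀ g : G, Monotone (g • · : P → P)) (p q : P) :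
    (∃ p' q' : P, Quotient.mk (orbitRel G P) p = Quotient.mk (orbitRel G P) p' ∧
      Quotient.mk (orbitRel G P) q = Quotient.mk (orbitRel G P) q' ∧
      ∃ g h : G, g • p' ≤ h • q') ↔ LeOrbit G p q := by
  constructor
  · rintro ⟨p', q', hp, hq, hle⟩
    have hp' : p ∈ orbit G p' := Quotient.exact hp
    have hq' : q' ∈ orbit G q := Quotient.exact hq.symm
    exact (leOrbit_of_mem_orbit hp').trans hmono
      (((leOrbit_iff_exists_smul_le_smul hmono).2 hle).trans hmono (leOrbit_of_mem_orbit hq'))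
  · intro hle
    exact ⟨p, q, rfl, rfl, (leOrbit_iff_exists_smul_le_smul hmono).1 hle⟩

end MulAction

theorem orbit_quotient_is_partialOrder
    {P : Type*} [PartialOrder P] [Finite P]
    (G : Type*) [Group G] [MulAction G P]
    (hord : ∀ (g : G) (p q : P), p ≤ q ↔ g • p ≤ g • q) :
    IsPartialOrder (Quotient (MulAction.orbitRel G P))
      (fun a b => ∃ p q : P, a = Quotient.mk (MulAction.orbitRel G P) p ∧
        b = Quotient.mk (MulAction.orbitRel G P) q ∧
        ∃ g h : G, g • p ≤ h • q) := by
  have hmono : ∀ g : G, Monotone (g • · : P → P) := fun g _ _ => (hord g _ _).1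
  have hrel := MulAction.exists_mk_eq_mk_smul_le_smul_iff hmono
  refine { refl := ?_, trans := ?_, antisymm := ?_ }
  · exact Quotient.ind fun p => (hrel p p).2 (leOrbit_refl p)
  · refine Quotient.ind fun p => Quotient.ind fun q => Quotient.ind fun r => ?_
    simp only [hrel]
    exact fun hpq hqr => hpq.trans hmono hqr
  · refine Quotient.ind fun p => Quotient.ind fun q => ?_
    simp only [hrel]
    exact fun hpq hqp => (Quotient.sound (hpq.mem_orbit hmono hqp)).symm
end

section
/- Let P be a finite poset with a unique minimal element 0̂, and let θ be an equivalence relation on P such that {0̂} is a θ-class and θ is upper regular. Then the quotient relation on P/θ, defined by [p] ≤ [q] iff ∃ p' ∈ [p], q' ∈ [q], p' ≤ q', is a partial order. -/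
def Setoid.IsUpperRegular {P : Type*} [Preorder P] (θ : Setoid P) : Prop :=
  ∀ p q p' : P, p ≤ q → θ.r p p' → ∃ q' : P, θ.r q q' ∧ p' ≤ q'

section

variable {P : Type*} [PartialOrder P] {θ : Setoid P}

theorem quotRel_refl (a : Quotient θ) : quotRel θ a a := by
  obtain ⟨p, rfl⟩ := Quotient.exists_rep a
  exact ⟨p, p, rfl, rfl, le_rfl⟩

namespace Setoid.IsUpperRegular

theorem exists_le_of_quotRel (hθ : θ.IsUpperRegular) {a b : Quotient θ} (hab : quotRel θ a b)
    {x : P} (hx : Quotient.mk θ x = a) : ∃ y, Quotient.mk θ y = b ∧ x ≤ y := by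
  obtain ⟨p, q, rfl, rfl, hpq⟩ := hab
  obtain ⟨y, hqy, hxy⟩ := hθ p q x hpq (θ.symm (Quotient.exact hx))
  exact ⟨y, (Quotient.sound hqy).symm, hxy⟩

theorem quotRel_trans (hθ : θ.IsUpperRegular) {a b c : Quotient θ} (hab : quotRel θ a b)
    (hbc : quotRel θ b c) : quotRel θ a c := by
  obtain ⟨p, q, rfl, rfl, hpq⟩ := hab
  obtain ⟨r, hr, hqr⟩ := hθ.exists_le_of_quotRel hbc rfl
  exact ⟨p, r, rfl, hr.symm, hpq.trans hqr⟩

theorem quotRel_antisymm [Finite P] (hθ : θ.IsUpperRegular) {a b : Quotient θ}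
    (hab : quotRel θ a b) (hba : quotRel θ b a) : a = b := by
  obtain ⟨p, rfl⟩ := Quotient.exists_rep a
  obtain ⟨m, hm_mem, hm_max⟩ :=
    (Set.toFinite {x | Quotient.mk θ x = Quotient.mk θ p}).exists_maximal ⟨p, rfl⟩
  obtain ⟨y, hy, hmy⟩ := hθ.exists_le_of_quotRel hab hm_mem
  obtain ⟨m', hm', hym'⟩ := hθ.exists_le_of_quotRel hba hy
  have hym : y ≤ m := hym'.trans (hm_max hm' (hmy.trans hym'))
  rw [← hy, ← le_antisymm hmy hym]
  exact hm_mem.symm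

end Setoid.IsUpperRegular

end

theorem homogeneous_congruence_quotient_is_partialOrder_general
    {P : Type*} [PartialOrder P] [Finite P] (θ : Setoid P)
    (hupper : ∀ p q p' : P, p ≤ q → θ.r p p' → ∃ q' : P, θ.r q q' ∧ p' ≤ q') :
    IsPartialOrder (Quotient θ) (quotRel θ) :=
  have hθ : θ.IsUpperRegular := hupper
  { refl := quotRel_refl
    trans := fun _ _ _ => hθ.quotRel_trans
    antisymm := fun _ _ => hθ.quotRel_antisymm }

theorem homogeneous_congruence_quotient_is_partialOrder
    {P : Type*} [PartialOrder P] [Finite P] (θ : Setoid P)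
    (z : P) (hzmin : IsMin z) (hzuniq : ∀ p : P, IsMin p → p = z)
    (hzclass : ∀ p : P, θ.r p z → p = z)
    (hupper : ∀ p q p' : P, p ≤ q → θ.r p p' → ∃ q' : P, θ.r q q' ∧ p' ≤ q') :
    IsPartialOrder (Quotient θ) (quotRel θ) :=
  homogeneous_congruence_quotient_is_partialOrder_general θ hupper
end
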